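/- arXiv:2602.12258 — 3 statements merged into one kernel-verified Lean document; each statement's English description precedes it below -/
import Mathlib

section
/- Let |ψ⟩ and |φ⟩ be unit vectors in ℂ², let p₁, p₂ ∈ [0,1] with p₁ + p₂ = 1, and let C₁, C₂ be the Choi operators of the Lüders instruments of the projective measurements {|ψ⟩⟨ψ|, I−|ψ⟩⟨ψ|} and {|φ⟩⟨φ|, I−|φ⟩⟨φ|}, namely C_x = Σ_{a=1}^{2} M_{a|x}ᵀ ⊗ M_{a|x} ⊗ |a⟩⟨a|. Then there exists a two-outcome tester (T₁, T₂) on ℂ²⊗(ℂ²⊗ℂ²) such that p₁·Tr(C₁T₁) + p₂·Tr(C₂T₂) = (1/2)·(1 + √(1 − 4p₁p₂|⟨ψ|φ⟩|⁴)). -/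
open Matrix Kronecker
open scoped ComplexOrder

noncomputable section

/-- The rank-one projector `|v⟩⟨v|`. -/
def proj {d : ℕ} (v : Fin d → ℂ) : Matrix (Fin d) (Fin d) ℂ :=
  Matrix.vecMulVec v (star v)

/-- Projection onto the `a`-th computational basis vector of the outcome register. -/
def outm {n : ℕ} (a : Fin n) : Matrix (Fin n) (Fin n) ℂ :=
  Matrix.single a a 1

/-- A two-outcome tester on `ℂ^{dIn} ⊗ ℂ^{dOut}`. -/
def IsTester {dIn dOut : Type} [Fintype dIn] [Fintype dOut] [DecidableEq dIn] [DecidableEq dOut]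
    (T₁ T₂ : Matrix (dIn × dOut) (dIn × dOut) ℂ) : Prop :=
  T₁.PosSemidef ∧ T₂.PosSemidef ∧
    ∃ σ : Matrix dIn dIn ℂ, σ.PosSemidef ∧ σ.trace = 1 ∧
      T₁ + T₂ = σ ⊗ₖ (1 : Matrix dOut dOut ℂ)

/-- Choi operator of the Lüders instrument of the projective qubit measurement `{P, 1 - P}`. -/
def ludersChoi (P : Matrix (Fin 2) (Fin 2) ℂ) :
    Matrix (Fin 2 × Fin 2 × Fin 2) (Fin 2 × Fin 2 × Fin 2) ℂ :=
  Pᵀ ⊗ₖ (P ⊗ₖ outm 0) + (1 - P)ᵀ ⊗ₖ ((1 - P) ⊗ₖ outm 1)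

lemma vmv_mul (a b c d : Fin 2 → ℂ) :
    vecMulVec a (star b) * vecMulVec c (star d) = (star b ⬝ᵥ c) • vecMulVec a (star d) := by
  ext i j
  simp [vecMulVec_apply, Matrix.mul_apply, dotProduct, Fin.sum_univ_two]
  ring

lemma vmv_trace (a b : Fin 2 → ℂ) : (vecMulVec a (star b)).trace = star b ⬝ᵥ a := by
  simp [Matrix.trace, Matrix.diag, vecMulVec_apply, dotProduct, Fin.sum_univ_two]
  ring

lemma vmv_ct (a b : Fin 2 → ℂ) : (vecMulVec a (star b))ᴴ = vecMulVec b (star a) := by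
  ext i j
  simp [vecMulVec_apply, Matrix.conjTranspose_apply]
  ring

lemma vmv_psd (v : Fin 2 → ℂ) : (vecMulVec v (star v)).PosSemidef := by
  refine Matrix.PosSemidef.of_dotProduct_mulVec_nonneg ?_ ?_
  · exact vmv_ct v v
  · intro x
    have : star x ⬝ᵥ (vecMulVec v (star v)) *ᵥ x = star (star v ⬝ᵥ x) * (star v ⬝ᵥ x) := by
      simp [dotProduct, Matrix.mulVec, vecMulVec_apply, Fin.sum_univ_two]
      ring
    rw [this]
    exact star_mul_self_nonneg _

lemma kron_ct {m n : Type} [Fintype m] [Fintype n] (A : Matrix m m ℂ) (B : Matrix n n ℂ) :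
    (A ⊗ₖ B)ᴴ = Aᴴ ⊗ₖ Bᴴ := by
  ext ⟨i₁, i₂⟩ ⟨j₁, j₂⟩
  simp [Matrix.conjTranspose_apply, kroneckerMap_apply]

lemma psd_kron {m n : Type} [Fintype m] [Fintype n] [DecidableEq m] [DecidableEq n]
    {A : Matrix m m ℂ} {B : Matrix n n ℂ} (hA : A.PosSemidef) (hB : B.PosSemidef) :
    (A ⊗ₖ B).PosSemidef := by
  exact hA.kronecker hB

lemma psd_smul {n : Type} [Fintype n] {A : Matrix n n ℂ} (hA : A.PosSemidef) {c : ℝ}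
    (hc : 0 ≤ c) : ((c : ℂ) • A).PosSemidef := by
  refine Matrix.PosSemidef.of_dotProduct_mulVec_nonneg ?_ ?_
  · rw [Matrix.IsHermitian, Matrix.conjTranspose_smul, hA.1]
    congr 1
    simp [Complex.ext_iff]
  · intro x
    rw [Matrix.smul_mulVec, dotProduct_smul]
    exact smul_nonneg (by positivity) (hA.dotProduct_mulVec_nonneg x)

lemma trace_kron3 {m n p : Type} [Fintype m] [Fintype n] [Fintype p]
    (A C : Matrix m m ℂ) (B D : Matrix n n ℂ) (E F : Matrix p p ℂ) :
    ((A ⊗ₖ (B ⊗ₖ E)) * (C ⊗ₖ (D ⊗ₖ F))).trace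
      = (A * C).trace * ((B * D).trace * (E * F).trace) := by
  rw [← Matrix.mul_kronecker_mul, ← Matrix.mul_kronecker_mul, Matrix.trace_kronecker,
    Matrix.trace_kronecker]

lemma outm_trace_mul (a b : Fin 2) :
    (outm a * outm b : Matrix (Fin 2) (Fin 2) ℂ).trace = if a = b then 1 else 0 := by
  fin_cases a <;> fin_cases b <;>
    simp [outm, Matrix.trace, Matrix.diag, Matrix.mul_apply, Matrix.single,
      Fin.sum_univ_two]

lemma outm_add : (outm 0 + outm 1 : Matrix (Fin 2) (Fin 2) ℂ) = 1 := by
  ext i j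
  fin_cases i <;> fin_cases j <;>
    simp [outm, Matrix.single, Matrix.one_apply]

lemma outm_psd (a : Fin 2) : (outm a : Matrix (Fin 2) (Fin 2) ℂ).PosSemidef := by
  have : (outm a : Matrix (Fin 2) (Fin 2) ℂ) = Matrix.diagonal (Pi.single a 1) := by
    ext i j
    fin_cases a <;> fin_cases i <;> fin_cases j <;>
      simp [outm, Matrix.single, Matrix.diagonal, Pi.single_apply]
  rw [this]
  refine Matrix.PosSemidef.diagonal ?_
  intro i
  by_cases h : i = a <;> simp [h, Pi.single_apply]

/-- real-coefficient combination of two vectors -/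
def co (e f : Fin 2 → ℂ) (a b : ℝ) : Fin 2 → ℂ := (a : ℂ) • e + (b : ℂ) • f

def Vm (e f : Fin 2 → ℂ) (a b c d : ℝ) : Matrix (Fin 2) (Fin 2) ℂ :=
  vecMulVec (co e f a b) (star (co e f c d))

def Wm (e f : Fin 2 → ℂ) (w v : ℝ) : Matrix (Fin 2) (Fin 2) ℂ :=
  (w : ℂ) • (Vm e f 1 0 1 0 - Vm e f 0 1 0 1) + (v : ℂ) • (Vm e f 1 0 0 1 + Vm e f 0 1 1 0)

def Pim (e f : Fin 2 → ℂ) (w v : ℝ) : Matrix (Fin 2) (Fin 2) ℂ :=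
  ((1/2 : ℝ) : ℂ) • ((1 : Matrix (Fin 2) (Fin 2) ℂ) + Wm e f w v)

section Abstract

variable {e f : Fin 2 → ℂ}
variable (hee : star e ⬝ᵥ e = 1) (hff : star f ⬝ᵥ f = 1) (hef : star e ⬝ᵥ f = 0)
  (hfe : star f ⬝ᵥ e = 0)

include hee hff hef hfe

lemma co_dot (a b c d : ℝ) :
    star (co e f a b) ⬝ᵥ co e f c d = ((a * c + b * d : ℝ) : ℂ) := by
  simp only [co, star_add, star_smul, add_dotProduct, dotProduct_add, smul_dotProduct,
    dotProduct_smul, hee, hff, hef, hfe, Complex.star_def, Complex.conj_ofReal, smul_eq_mul]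
  push_cast
  ring

lemma Vm_tr (a b c d : ℝ) : (Vm e f a b c d).trace = ((c * a + d * b : ℝ) : ℂ) := by
  rw [Vm, vmv_trace, co_dot hee hff hef hfe]

lemma Vm_mul (a b c d a' b' c' d' : ℝ) :
    Vm e f a b c d * Vm e f a' b' c' d'
      = ((c * a' + d * b' : ℝ) : ℂ) • Vm e f a b c' d' := by
  rw [Vm, Vm, vmv_mul, co_dot hee hff hef hfe, Vm]

lemma Vm_trmul (a b c d a' b' c' d' : ℝ) :
    (Vm e f a b c d * Vm e f a' b' c' d').trace
      = (((c * a' + d * b') * (c' * a + d' * b) : ℝ) : ℂ) := by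
  rw [Vm_mul hee hff hef hfe, Matrix.trace_smul, Vm_tr hee hff hef hfe, smul_eq_mul]
  push_cast
  ring

end Abstract

lemma Vm_ct (e f : Fin 2 → ℂ) (a b c d : ℝ) : (Vm e f a b c d)ᴴ = Vm e f c d a b := by
  rw [Vm, vmv_ct, Vm]

lemma tester_value (e f ψ φ : Fin 2 → ℂ)
    (hee : star e ⬝ᵥ e = 1) (hff : star f ⬝ᵥ f = 1) (hef : star e ⬝ᵥ f = 0)
    (p₁ p₂ C A x y w₁ v₁ w₂ v₂ : ℝ)
    (hψ : ψ = co e f C A)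
    (hQ : proj φ = proj (co e f C (-A)))
    (hCA : C ^ 2 + A ^ 2 = 1) (hxy : x ^ 2 + y ^ 2 = 1)
    (hw1 : w₁ ^ 2 + v₁ ^ 2 = 1) (hw2 : w₂ ^ 2 + v₂ ^ 2 = 1) :
    ∃ T₁ T₂ : Matrix (Fin 2 × Fin 2 × Fin 2) (Fin 2 × Fin 2 × Fin 2) ℂ,
      IsTester T₁ T₂ ∧
      p₁ * ((ludersChoi (proj ψ) * T₁).trace).re + p₂ * ((ludersChoi (proj φ) * T₂).trace).re
        = p₁ * ((C*x+A*y)^2 * (1 + (w₁*(C^2-A^2) + v₁*(2*C*A)))/2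
              + (1 - (C*x+A*y)^2) * (1 - (w₂*(C^2-A^2) + v₂*(2*C*A)))/2)
        + p₂ * ((C*x+(-A)*y)^2 * (1 + ((-w₁)*(C^2-(-A)^2) + (-v₁)*(2*C*(-A))))/2
              + (1 - (C*x+(-A)*y)^2) * (1 - ((-w₂)*(C^2-(-A)^2) + (-v₂)*(2*C*(-A))))/2) := by
  have hfe : star f ⬝ᵥ e = 0 := by
    have h : star f ⬝ᵥ e = star (star e ⬝ᵥ f) := by
      simp [dotProduct, Fin.sum_univ_two, mul_comm]
    rw [h, hef, star_zero]
  set σ : Matrix (Fin 2) (Fin 2) ℂ := (Vm e f x y x y)ᵀ with hσ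
  -- positivity of the Pim blocks
  have hG : (1 - Vm e f 1 0 1 0 - Vm e f 0 1 0 1 : Matrix (Fin 2) (Fin 2) ℂ).PosSemidef := by
    have hherm : (1 - Vm e f 1 0 1 0 - Vm e f 0 1 0 1 : Matrix (Fin 2) (Fin 2) ℂ)ᴴ
        = 1 - Vm e f 1 0 1 0 - Vm e f 0 1 0 1 := by
      simp [Matrix.conjTranspose_sub, Vm_ct]
    have hsq : (1 - Vm e f 1 0 1 0 - Vm e f 0 1 0 1 : Matrix (Fin 2) (Fin 2) ℂ)
        * (1 - Vm e f 1 0 1 0 - Vm e f 0 1 0 1)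
        = 1 - Vm e f 1 0 1 0 - Vm e f 0 1 0 1 := by
      simp only [sub_mul, mul_sub, one_mul, mul_one, Vm_mul hee hff hef hfe]
      norm_num
    have heq : (1 - Vm e f 1 0 1 0 - Vm e f 0 1 0 1 : Matrix (Fin 2) (Fin 2) ℂ)
        = (1 - Vm e f 1 0 1 0 - Vm e f 0 1 0 1)ᴴ * (1 - Vm e f 1 0 1 0 - Vm e f 0 1 0 1) := by
      rw [hherm, hsq]
    rw [heq]
    exact Matrix.posSemidef_conjTranspose_mul_self _
  have hBpsd : ∀ w v : ℝ, w ^ 2 + v ^ 2 = 1 →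
      (((1/2 : ℝ) : ℂ) • (((1+w : ℝ) : ℂ) • Vm e f 1 0 1 0 + ((1-w : ℝ) : ℂ) • Vm e f 0 1 0 1
        + (v : ℂ) • (Vm e f 1 0 0 1 + Vm e f 0 1 1 0))).PosSemidef := by
    intro w v hwv
    have hwvC : ((w : ℂ)) ^ 2 + ((v : ℂ)) ^ 2 = 1 := by exact_mod_cast hwv
    set B₀ : Matrix (Fin 2) (Fin 2) ℂ := ((1+w : ℝ) : ℂ) • Vm e f 1 0 1 0
      + ((1-w : ℝ) : ℂ) • Vm e f 0 1 0 1 + (v : ℂ) • (Vm e f 1 0 0 1 + Vm e f 0 1 1 0) with hB₀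
    have hherm : B₀ᴴ = B₀ := by
      simp only [hB₀, Matrix.conjTranspose_add, Matrix.conjTranspose_smul, Vm_ct,
        Complex.star_def, Complex.conj_ofReal]
      abel
    have hsq : B₀ * B₀ = (2 : ℂ) • B₀ := by
      simp only [hB₀, add_mul, mul_add, smul_mul_assoc, mul_smul_comm, smul_smul,
        Vm_mul hee hff hef hfe]
      match_scalars <;> push_cast <;>
        first
          | ring1
          | linear_combination -hwvC
          | linear_combination hwvC
    have heq : ((1/2 : ℝ) : ℂ) • B₀ = (((1/2 : ℝ) : ℂ) • B₀)ᴴ * (((1/2 : ℝ) : ℂ) • B₀) := by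
      rw [Matrix.conjTranspose_smul, hherm, smul_mul_smul_comm, hsq, smul_smul]
      congr 1
      rw [Complex.star_def, Complex.conj_ofReal]
      push_cast
      norm_num
    rw [heq]
    exact Matrix.posSemidef_conjTranspose_mul_self _
  have hPim : ∀ w v : ℝ, w ^ 2 + v ^ 2 = 1 → (Pim e f w v).PosSemidef := by
    intro w v hwv
    have hdecomp : Pim e f w v
        = ((1/2 : ℝ) : ℂ) • (1 - Vm e f 1 0 1 0 - Vm e f 0 1 0 1)
          + ((1/2 : ℝ) : ℂ) • (((1+w : ℝ) : ℂ) • Vm e f 1 0 1 0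
            + ((1-w : ℝ) : ℂ) • Vm e f 0 1 0 1 + (v : ℂ) • (Vm e f 1 0 0 1 + Vm e f 0 1 1 0)) := by
      rw [Pim, Wm]
      push_cast
      module
    rw [hdecomp]
    exact (psd_smul hG (by norm_num)).add (hBpsd w v hwv)
  have hσpsd : σ.PosSemidef := (vmv_psd _).transpose
  have hσtr : σ.trace = 1 := by
    rw [hσ, Matrix.trace_transpose, Vm_tr hee hff hef hfe]
    have : x * x + y * y = 1 := by nlinarith [hxy]
    rw [this]
    norm_num
  have hPiSum : ∀ w v : ℝ, Pim e f w v + Pim e f (-w) (-v) = 1 := by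
    intro w v
    rw [Pim, Pim, Wm, Wm]
    push_cast
    module
  refine ⟨σ ⊗ₖ (Pim e f w₁ v₁ ⊗ₖ outm 0 + Pim e f w₂ v₂ ⊗ₖ outm 1),
          σ ⊗ₖ (Pim e f (-w₁) (-v₁) ⊗ₖ outm 0 + Pim e f (-w₂) (-v₂) ⊗ₖ outm 1), ⟨?_, ?_, σ, hσpsd, hσtr, ?_⟩, ?_⟩
  · exact psd_kron hσpsd (((psd_kron (hPim w₁ v₁ hw1) (outm_psd 0))).add
      ((psd_kron (hPim w₂ v₂ hw2) (outm_psd 1))))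
  · have hw1' : (-w₁) ^ 2 + (-v₁) ^ 2 = 1 := by rw [neg_sq, neg_sq]; exact hw1
    have hw2' : (-w₂) ^ 2 + (-v₂) ^ 2 = 1 := by rw [neg_sq, neg_sq]; exact hw2
    exact psd_kron hσpsd (((psd_kron (hPim _ _ hw1') (outm_psd 0))).add
      ((psd_kron (hPim _ _ hw2') (outm_psd 1))))
  · rw [← Matrix.kronecker_add]
    congr 1
    have : Pim e f w₁ v₁ ⊗ₖ (outm 0 : Matrix (Fin 2) (Fin 2) ℂ)
          + Pim e f w₂ v₂ ⊗ₖ (outm 1 : Matrix (Fin 2) (Fin 2) ℂ)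
        + (Pim e f (-w₁) (-v₁) ⊗ₖ (outm 0 : Matrix (Fin 2) (Fin 2) ℂ)
          + Pim e f (-w₂) (-v₂) ⊗ₖ (outm 1 : Matrix (Fin 2) (Fin 2) ℂ))
        = (Pim e f w₁ v₁ + Pim e f (-w₁) (-v₁)) ⊗ₖ (outm 0 : Matrix (Fin 2) (Fin 2) ℂ)
          + (Pim e f w₂ v₂ + Pim e f (-w₂) (-v₂)) ⊗ₖ (outm 1 : Matrix (Fin 2) (Fin 2) ℂ) := by
      rw [Matrix.add_kronecker, Matrix.add_kronecker]
      abel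
    rw [this, hPiSum, hPiSum, ← Matrix.kronecker_add, outm_add, Matrix.one_kronecker_one]
  -- the value computation
  have main : ∀ aa w1 v1 w2 v2 : ℝ, C ^ 2 + aa ^ 2 = 1 →
      (ludersChoi (proj (co e f C aa))
        * (σ ⊗ₖ (Pim e f w1 v1 ⊗ₖ outm 0 + Pim e f w2 v2 ⊗ₖ outm 1))).trace
      = (((C*x+aa*y)^2 * (1 + (w1*(C^2-aa^2) + v1*(2*C*aa)))/2
          + (1 - (C*x+aa*y)^2) * (1 - (w2*(C^2-aa^2) + v2*(2*C*aa)))/2 : ℝ) : ℂ) := by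
    intro aa w1 v1 w2 v2 haa
    have hPV : proj (co e f C aa) = Vm e f C aa C aa := rfl
    have hPtr : (Vm e f C aa C aa).trace = 1 := by
      rw [Vm_tr hee hff hef hfe]
      have : C * C + aa * aa = 1 := by nlinarith [haa]
      rw [this]; norm_num
    have hPW : ∀ w v : ℝ, (Vm e f C aa C aa * Wm e f w v).trace
        = ((w*(C^2-aa^2) + v*(2*C*aa) : ℝ) : ℂ) := by
      intro w v
      simp only [Wm, mul_add, mul_sub, mul_smul_comm, Matrix.trace_add, Matrix.trace_sub,
        Matrix.trace_smul, Vm_trmul hee hff hef hfe, smul_eq_mul]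
      push_cast; ring
    have hWtr : ∀ w v : ℝ, (Wm e f w v).trace = 0 := by
      intro w v
      simp only [Wm, Matrix.trace_add, Matrix.trace_sub, Matrix.trace_smul,
        Vm_tr hee hff hef hfe, smul_eq_mul]
      norm_num
    have hPPi : ∀ w v : ℝ, (Vm e f C aa C aa * Pim e f w v).trace
        = (((1 + (w*(C^2-aa^2) + v*(2*C*aa)))/2 : ℝ) : ℂ) := by
      intro w v
      rw [Pim, mul_smul_comm, Matrix.trace_smul, mul_add, Matrix.trace_add, mul_one,
        hPtr, hPW, smul_eq_mul]
      push_cast; ring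
    have hPitr : ∀ w v : ℝ, (Pim e f w v).trace = 1 := by
      intro w v
      rw [Pim, Matrix.trace_smul, Matrix.trace_add, Matrix.trace_one, hWtr, smul_eq_mul]
      norm_num
    have hPσ : ((Vm e f C aa C aa)ᵀ * σ).trace = (((C*x+aa*y)^2 : ℝ) : ℂ) := by
      rw [hσ, ← Matrix.transpose_mul, Matrix.trace_transpose, Vm_trmul hee hff hef hfe]
      push_cast; ring
    have h1Pσ : ((1 - Vm e f C aa C aa)ᵀ * σ).trace = ((1 - (C*x+aa*y)^2 : ℝ) : ℂ) := by
      rw [Matrix.transpose_sub, Matrix.transpose_one, sub_mul, one_mul, Matrix.trace_sub,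
        hσtr, hPσ]
      push_cast; ring
    have h1PPi : ∀ w v : ℝ, ((1 - Vm e f C aa C aa) * Pim e f w v).trace
        = (((1 - (w*(C^2-aa^2) + v*(2*C*aa)))/2 : ℝ) : ℂ) := by
      intro w v
      rw [sub_mul, one_mul, Matrix.trace_sub, hPitr, hPPi]
      push_cast; ring
    have ho00 : (outm 0 * outm 0 : Matrix (Fin 2) (Fin 2) ℂ).trace = 1 := by
      rw [outm_trace_mul]; norm_num
    have ho01 : (outm 0 * outm 1 : Matrix (Fin 2) (Fin 2) ℂ).trace = 0 := by
      rw [outm_trace_mul]; norm_num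
    have ho10 : (outm 1 * outm 0 : Matrix (Fin 2) (Fin 2) ℂ).trace = 0 := by
      rw [outm_trace_mul]; norm_num
    have ho11 : (outm 1 * outm 1 : Matrix (Fin 2) (Fin 2) ℂ).trace = 1 := by
      rw [outm_trace_mul]; norm_num
    rw [hPV, ludersChoi, Matrix.kronecker_add σ, add_mul, mul_add, mul_add,
      Matrix.trace_add, Matrix.trace_add, Matrix.trace_add,
      trace_kron3, trace_kron3, trace_kron3, trace_kron3,
      ho00, ho01, ho10, ho11, hPσ, h1Pσ, hPPi w1 v1, hPPi w2 v2, h1PPi w1 v1, h1PPi w2 v2]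
    push_cast; ring
  rw [hψ, hQ, main A w₁ v₁ w₂ v₂ hCA,
    main (-A) (-w₁) (-v₁) (-w₂) (-v₂) (by rw [neg_sq]; exact hCA),
    Complex.ofReal_re, Complex.ofReal_re]

lemma dot_conj (a b : Fin 2 → ℂ) : star a ⬝ᵥ b = star (star b ⬝ᵥ a) := by
  simp [dotProduct, Fin.sum_univ_two, mul_comm]

lemma dot_self (v : Fin 2 → ℂ) :
    star v ⬝ᵥ v = ((‖v 0‖ ^ 2 + ‖v 1‖ ^ 2 : ℝ) : ℂ) := by
  simp [dotProduct, Fin.sum_univ_two, ← Complex.normSq_eq_norm_sq, Complex.normSq_eq_conj_mul_self]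

lemma dot_self_eq_zero {v : Fin 2 → ℂ} (h : star v ⬝ᵥ v = 0) : v = 0 := by
  rw [dot_self] at h
  have h' : ‖v 0‖ ^ 2 + ‖v 1‖ ^ 2 = 0 := by exact_mod_cast h
  have h0 : ‖v 0‖ = 0 := by
    nlinarith [norm_nonneg (v 0), norm_nonneg (v 1), sq_nonneg (‖v 1‖)]
  have h1 : ‖v 1‖ = 0 := by
    nlinarith [norm_nonneg (v 0), norm_nonneg (v 1), sq_nonneg (‖v 0‖)]
  funext i
  fin_cases i
  · simpa using norm_eq_zero.mp h0
  · simpa using norm_eq_zero.mp h1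

lemma proj_smul_unit (z : ℂ) (v : Fin 2 → ℂ) (hz : ‖z‖ = 1) :
    proj (z • v) = proj v := by
  have hzz : z * star z = 1 := by
    rw [Complex.star_def, Complex.mul_conj, Complex.normSq_eq_norm_sq, hz]
    norm_num
  ext i j
  simp only [proj, vecMulVec_apply, Pi.smul_apply, Pi.star_apply, smul_eq_mul, star_mul']
  linear_combination v i * star (v j) * hzz


set_option maxHeartbeats 2000000 in
theorem stmt1 (ψ φ : Fin 2 → ℂ) (hψ : star ψ ⬝ᵥ ψ = 1) (hφ : star φ ⬝ᵥ φ = 1)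
    (p₁ p₂ : ℝ) (hp₁ : 0 ≤ p₁) (hp₂ : 0 ≤ p₂) (hp : p₁ + p₂ = 1) :
    ∃ T₁ T₂ : Matrix (Fin 2 × Fin 2 × Fin 2) (Fin 2 × Fin 2 × Fin 2) ℂ,
      IsTester T₁ T₂ ∧
      p₁ * ((ludersChoi (proj ψ) * T₁).trace).re + p₂ * ((ludersChoi (proj φ) * T₂).trace).re =
        (1 / 2) * (1 + Real.sqrt (1 - 4 * p₁ * p₂ * ‖star ψ ⬝ᵥ φ‖ ^ 4)) := by
  set c : ℂ := star ψ ⬝ᵥ φ with hc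
  set r : ℝ := ‖c‖ with hrdef
  have hr0 : 0 ≤ r := norm_nonneg c
  have hφψ : star φ ⬝ᵥ ψ = star c := by rw [dot_conj, ← hc]
  have hccs : c * star c = ((r : ℂ)) ^ 2 := by
    rw [Complex.star_def, Complex.mul_conj, Complex.normSq_eq_norm_sq, ← hrdef]
    push_cast
    ring
  have hvv : star (φ - c • ψ) ⬝ᵥ (φ - c • ψ) = ((1 - r ^ 2 : ℝ) : ℂ) := by
    simp only [star_sub, star_smul, sub_dotProduct, dotProduct_sub, smul_dotProduct,
      dotProduct_smul, hψ, hφ, ← hc, hφψ, smul_eq_mul]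
    push_cast
    linear_combination (-1 : ℂ) * hccs

  have hr1 : r ≤ 1 := by
    have h2 := hvv
    rw [dot_self] at h2
    have h3 : ‖(φ - c • ψ) 0‖ ^ 2 + ‖(φ - c • ψ) 1‖ ^ 2 = 1 - r ^ 2 := by
      exact_mod_cast h2
    have h4 : (0:ℝ) ≤ 1 - r ^ 2 := by
      nlinarith [sq_nonneg (‖(φ - c • ψ) 0‖), sq_nonneg (‖(φ - c • ψ) 1‖)]
    nlinarith [h4]
  by_cases hrc : r < 1
  · -- main case
    -- phase-corrected φ
    set ζ : ℂ := if c = 0 then 1 else (r : ℂ) / c with hζdef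
    have hζabs : ‖ζ‖ = 1 := by
      by_cases h0 : c = 0
      · simp [hζdef, h0]
      · have hrne : r ≠ 0 := fun h => h0 (norm_eq_zero.mp (by rw [← hrdef, h]))
        simp [hζdef, h0, norm_div, Complex.norm_real, abs_of_nonneg hr0, ← hrdef]
        exact hrne
    set φt : Fin 2 → ℂ := ζ • φ with hφtdef
    have hψφt : star ψ ⬝ᵥ φt = ((r : ℝ) : ℂ) := by
      rw [hφtdef, dotProduct_smul, ← hc]
      by_cases h0 : c = 0
      · simp [hζdef, h0, show r = 0 from by rw [hrdef, h0]; simp]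
      · simp [hζdef, h0]
    have hφtψ : star φt ⬝ᵥ ψ = ((r : ℝ) : ℂ) := by
      rw [dot_conj, hψφt, Complex.star_def, Complex.conj_ofReal]
    have hφtφt : star φt ⬝ᵥ φt = 1 := by
      rw [hφtdef, star_smul, smul_dotProduct, dotProduct_smul, hφ]
      have : (starRingEnd ℂ) ζ * ζ = 1 := by
        rw [mul_comm, Complex.mul_conj, Complex.normSq_eq_norm_sq, hζabs]
        norm_num
      simpa [smul_eq_mul, Complex.star_def] using this
    have hprojφt : proj φt = proj φ := proj_smul_unit ζ φ hζabs
    -- the orthonormal basis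
    set C : ℝ := Real.sqrt ((1 + r) / 2) with hCdef
    set A : ℝ := Real.sqrt ((1 - r) / 2) with hAdef
    have hC2 : C ^ 2 = (1 + r) / 2 := Real.sq_sqrt (by linarith)
    have hA2 : A ^ 2 = (1 - r) / 2 := Real.sq_sqrt (by linarith)
    have hC0 : 0 < C := Real.sqrt_pos.mpr (by linarith)
    have hA0 : 0 < A := Real.sqrt_pos.mpr (by linarith)
    have hCA : C ^ 2 + A ^ 2 = 1 := by rw [hC2, hA2]; ring
    set e : Fin 2 → ℂ := (((2 * C)⁻¹ : ℝ) : ℂ) • (ψ + φt) with hedef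
    have hsum : star (ψ + φt) ⬝ᵥ (ψ + φt) = ((2 + 2 * r : ℝ) : ℂ) := by
      simp only [star_add, add_dotProduct, dotProduct_add, hψ, hφtφt, hψφt, hφtψ]
      push_cast
      ring
    have hee : star e ⬝ᵥ e = 1 := by
      rw [hedef, star_smul, smul_dotProduct, dotProduct_smul, hsum]
      simp only [smul_eq_mul, Complex.star_def, Complex.conj_ofReal]
      rw [show (((2 * C)⁻¹ : ℝ) : ℂ) * ((((2 * C)⁻¹ : ℝ) : ℂ) * ((2 + 2 * r : ℝ) : ℂ))
          = (((2 * C)⁻¹ * ((2 * C)⁻¹ * (2 + 2 * r)) : ℝ) : ℂ) from by push_cast; ring]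
      have : (2 * C)⁻¹ * ((2 * C)⁻¹ * (2 + 2 * r)) = 1 := by
        field_simp
        linear_combination -2 * hC2
      rw [this]
      norm_num
    have heψ : star e ⬝ᵥ ψ = ((C : ℝ) : ℂ) := by
      rw [hedef, star_smul, smul_dotProduct]
      simp only [star_add, add_dotProduct, hψ, hφtψ, smul_eq_mul, Complex.star_def,
        Complex.conj_ofReal]
      rw [show (((2 * C)⁻¹ : ℝ) : ℂ) * (1 + ((r : ℝ) : ℂ)) = (((2 * C)⁻¹ * (1 + r) : ℝ) : ℂ)
        from by push_cast; ring]
      congr 1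
      field_simp
      linear_combination -2 * hC2
    have hψe : star ψ ⬝ᵥ e = ((C : ℝ) : ℂ) := by
      rw [dot_conj, heψ, Complex.star_def, Complex.conj_ofReal]
    set f : Fin 2 → ℂ := ((A⁻¹ : ℝ) : ℂ) • (ψ - ((C : ℝ) : ℂ) • e) with hfdef
    have hef : star e ⬝ᵥ f = 0 := by
      rw [hfdef]
      simp only [dotProduct_smul, dotProduct_sub, heψ, hee]
      simp [smul_eq_mul]
    have hCAc : ((C : ℝ) : ℂ) ^ 2 + ((A : ℝ) : ℂ) ^ 2 = 1 := by exact_mod_cast hCA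
    have hinner : star (ψ - ((C : ℝ) : ℂ) • e) ⬝ᵥ (ψ - ((C : ℝ) : ℂ) • e) = ((A ^ 2 : ℝ) : ℂ) := by
      simp only [star_sub, star_smul, sub_dotProduct, dotProduct_sub, smul_dotProduct,
        dotProduct_smul, hψ, hψe, heψ, hee, smul_eq_mul, Complex.star_def, Complex.conj_ofReal]
      push_cast
      linear_combination -hCAc
    have hff : star f ⬝ᵥ f = 1 := by
      rw [hfdef, star_smul, smul_dotProduct, dotProduct_smul, hinner]
      simp only [smul_eq_mul, Complex.star_def, Complex.conj_ofReal]
      rw [show ((A⁻¹ : ℝ) : ℂ) * (((A⁻¹ : ℝ) : ℂ) * ((A ^ 2 : ℝ) : ℂ))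
          = ((A⁻¹ * (A⁻¹ * A ^ 2) : ℝ) : ℂ) from by push_cast; ring,
        show A⁻¹ * (A⁻¹ * A ^ 2) = 1 from by field_simp]
      norm_num
    have hAf : ((A : ℝ) : ℂ) • f = ψ - ((C : ℝ) : ℂ) • e := by
      rw [hfdef, smul_smul, show ((A : ℝ) : ℂ) * ((A⁻¹ : ℝ) : ℂ) = ((A * A⁻¹ : ℝ) : ℂ) from by
        push_cast; ring, mul_inv_cancel₀ hA0.ne']
      simp
    have h2Ce : ((2 * C : ℝ) : ℂ) • e = ψ + φt := by
      rw [hedef, smul_smul, show ((2 * C : ℝ) : ℂ) * (((2 * C)⁻¹ : ℝ) : ℂ)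
        = ((2 * C * (2 * C)⁻¹ : ℝ) : ℂ) from by push_cast; ring,
        mul_inv_cancel₀ (by positivity : (2 * C : ℝ) ≠ 0)]
      simp
    have hψco : ψ = co e f C A := by
      rw [co, hAf]
      abel
    have hφtco : co e f C (-A) = φt := by
      have step : co e f C (-A) = ((2 * C : ℝ) : ℂ) • e - ψ := by
        rw [co, Complex.ofReal_neg, neg_smul, hAf]
        push_cast
        module
      rw [step, h2Ce]
      abel
    have hQ : proj φ = proj (co e f C (-A)) := by rw [hφtco, hprojφt]
    -- the scalar data
    set D : ℝ := p₁ - p₂ with hDdef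
    set R : ℝ := Real.sqrt (1 - r ^ 2 + D ^ 2 * r ^ 2) with hRdef
    have hRarg : (0:ℝ) < 1 - r ^ 2 + D ^ 2 * r ^ 2 := by
      have h5 : (0:ℝ) < 1 - r ^ 2 := by nlinarith
      nlinarith [sq_nonneg (D * r)]
    have hR2 : R ^ 2 = 1 - r ^ 2 + D ^ 2 * r ^ 2 := Real.sq_sqrt hRarg.le
    have hR0 : 0 < R := Real.sqrt_pos.mpr hRarg
    set S : ℝ := Real.sqrt (1 - 4 * p₁ * p₂ * r ^ 4) with hSdef
    have hD2 : 4 * p₁ * p₂ = 1 - D ^ 2 := by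
      rw [hDdef]; linear_combination (p₁ + p₂ + 1) * hp
    have hSarg : (0:ℝ) < 1 - 4 * p₁ * p₂ * r ^ 4 := by
      have h1 : 4 * p₁ * p₂ * r ^ 4 = r ^ 4 - (D * r ^ 2) ^ 2 := by
        linear_combination r ^ 4 * hD2
      have h2 : r ^ 4 < 1 := by
        have := pow_lt_one₀ hr0 hrc (n := 4) (by norm_num)
        exact this
      linarith [sq_nonneg (D * r ^ 2)]
    have hS2 : S ^ 2 = 1 - 4 * p₁ * p₂ * r ^ 4 := Real.sq_sqrt hSarg.le
    have hS0 : 0 < S := Real.sqrt_pos.mpr hSarg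
    have huabs : |D * r| ≤ R := by
      rw [← Real.sqrt_sq_eq_abs]
      apply Real.sqrt_le_sqrt
      nlinarith
    set u : ℝ := D * r / R with hudef
    have huR : u * R = D * r := by rw [hudef]; field_simp
    have hu1 : u ≤ 1 := by
      rw [hudef, div_le_one hR0]
      calc D * r ≤ |D * r| := le_abs_self _
      _ ≤ R := huabs
    have hu2 : -1 ≤ u := by
      rw [hudef, le_div_iff₀ hR0]
      linarith [neg_abs_le (D * r), huabs]
    set x : ℝ := Real.sqrt ((1 + u) / 2) with hxdef
    set y : ℝ := Real.sqrt ((1 - u) / 2) with hydef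
    have hx2 : x ^ 2 = (1 + u) / 2 := Real.sq_sqrt (by linarith)
    have hy2 : y ^ 2 = (1 - u) / 2 := Real.sq_sqrt (by linarith)
    have hxy : x ^ 2 + y ^ 2 = 1 := by rw [hx2, hy2]; ring
    have h2CA2 : (2 * C * A) ^ 2 = 1 - r ^ 2 := by
      linear_combination 4 * A ^ 2 * hC2 + 2 * (1 + r) * hA2
    have hxyR : (x * y) * R = C * A := by
      have h1 : x * y = Real.sqrt (((1 + u) / 2) * ((1 - u) / 2)) := by
        rw [hxdef, hydef, ← Real.sqrt_mul (by linarith : (0:ℝ) ≤ (1 + u) / 2)]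
      have h2 : ((1 + u) / 2) * ((1 - u) / 2) = (C * A / R) ^ 2 := by
        field_simp
        linear_combination hR2 - (u * R + D * r) * huR - h2CA2
      have h3 : (0:ℝ) ≤ C * A / R := by positivity
      rw [h1, h2, Real.sqrt_sq h3]
      field_simp
    set w : ℝ := r * R / S with hwdef
    set v : ℝ := 2 * C * A / S with hvdef
    have hw1 : w ^ 2 + v ^ 2 = 1 := by
      have key : (r * R) ^ 2 + (2 * C * A) ^ 2 = S ^ 2 := by
        linear_combination r ^ 2 * hR2 + h2CA2 - hS2 + r ^ 4 * hD2
      rw [hwdef, hvdef, div_pow, div_pow, ← add_div, key]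
      field_simp
    have hw2 : w ^ 2 + (-v) ^ 2 = 1 := by rw [neg_sq]; exact hw1
    obtain ⟨T₁, T₂, hT, hval⟩ := tester_value e f ψ φ hee hff hef p₁ p₂ C A x y
      w v w (-v) hψco hQ hCA hxy hw1 hw2
    refine ⟨T₁, T₂, hT, ?_⟩
    rw [hval]
    -- final scalar identity
    have hC2x2 : C ^ 2 * x ^ 2 = ((1 + r) / 2) * ((1 + u) / 2) := by rw [hC2, hx2]
    have hA2y2 : A ^ 2 * y ^ 2 = ((1 - r) / 2) * ((1 - u) / 2) := by rw [hA2, hy2]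
    have hKR : (C * x + A * y) ^ 2 * (2 * R) = R + D * r ^ 2 + (1 - r ^ 2) := by
      linear_combination (2*R)*hC2x2 + (2*R)*hA2y2 + (4*C*A)*hxyR + r*huR + h2CA2
    have hLR : (C * x - A * y) ^ 2 * (2 * R) = R + D * r ^ 2 - (1 - r ^ 2) := by
      linear_combination (2*R)*hC2x2 + (2*R)*hA2y2 - (4*C*A)*hxyR + r*huR - h2CA2
    have step1R : (p₁ * (2 * (C * x + A * y) ^ 2 - 1) + p₂ * (1 - 2 * (C * x - A * y) ^ 2))
        * (2 * R) = 2 * R ^ 2 := by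
      linear_combination (2*p₁)*hKR - (2*p₂)*hLR + (2*(1-r^2))*hp - (2*D*r^2)*hDdef - 2*hR2
    have veqS : v * (2 * C * A) * S = 1 - r ^ 2 := by
      rw [hvdef]
      field_simp
      linear_combination h2CA2
    have weqS : w * (C ^ 2 - A ^ 2) * S = r ^ 2 * R := by
      rw [hwdef, show C ^ 2 - A ^ 2 = r from by rw [hC2, hA2]; ring]
      field_simp
    refine mul_right_cancel₀ (show (4 * R * S) ≠ 0 from by positivity) ?_
    linear_combination (2*R)*veqS + (2*R^2)*weqS + (S*w*(C^2-A^2))*step1R + (2*R*r^2)*hR2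
      - (2*R)*hS2 + (2*R*r^4)*hD2 + (2*R*S*(1+v*(2*C*A)))*hp
  · -- r = 1 case
    have hre : r = 1 := le_antisymm hr1 (not_lt.mp hrc)
    have hv0 : φ - c • ψ = 0 := dot_self_eq_zero (by rw [hvv, hre]; norm_num)
    have hφc : φ = c • ψ := by
      have := sub_eq_zero.mp hv0
      exact this
    have hprojφ : proj φ = proj ψ := by
      rw [hφc]
      exact proj_smul_unit c ψ (by rw [← hrdef]; exact hre)
    set f : Fin 2 → ℂ := ![-(star (ψ 1)), star (ψ 0)] with hfdef
    have hff : star f ⬝ᵥ f = 1 := by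
      simp only [hfdef, dotProduct, Fin.sum_univ_two]
      rw [← hψ]
      simp [dotProduct, Fin.sum_univ_two]
      ring
    have hef : star ψ ⬝ᵥ f = 0 := by
      simp [hfdef, dotProduct, Fin.sum_univ_two]
      ring
    have hψco : ψ = co ψ f 1 0 := by simp [co]
    have hQ : proj φ = proj (co ψ f 1 (-(0:ℝ))) := by
      rw [hprojφ]
      congr 1
      simp [co]
    have hs4 : Real.sqrt (1 - 4 * p₁ * p₂ * r ^ 4) = |p₁ - p₂| := by
      rw [show 1 - 4 * p₁ * p₂ * r ^ 4 = (p₁ - p₂) ^ 2 from by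
        rw [hre]; linear_combination -(p₁ + p₂ + 1) * hp, Real.sqrt_sq_eq_abs]
    rcases le_or_gt p₂ p₁ with hple | hple
    · obtain ⟨T₁, T₂, hT, hval⟩ := tester_value ψ f ψ φ hψ hff hef p₁ p₂ 1 0 1 0 1 0 (-1) 0
        hψco hQ (by norm_num) (by norm_num) (by norm_num) (by norm_num)
      refine ⟨T₁, T₂, hT, ?_⟩
      rw [hval, hs4, abs_of_nonneg (by linarith : (0:ℝ) ≤ p₁ - p₂)]
      ring_nf
      linarith [hp]
    · obtain ⟨T₁, T₂, hT, hval⟩ := tester_value ψ f ψ φ hψ hff hef p₁ p₂ 1 0 1 0 (-1) 0 1 0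
        hψco hQ (by norm_num) (by norm_num) (by norm_num) (by norm_num)
      refine ⟨T₁, T₂, hT, ?_⟩
      rw [hval, hs4, abs_sub_comm, abs_of_nonneg (by linarith : (0:ℝ) ≤ p₂ - p₁)]
      ring_nf
      linarith [hp]
end
end

section
/- Let |ψ⟩ and |φ⟩ be unit vectors in ℂ², set M_{1|1} = |ψ⟩⟨ψ|, M_{2|1} = I − |ψ⟩⟨ψ|, M_{1|2} = |φ⟩⟨φ|, M_{2|2} = I − |φ⟩⟨φ|, and let C_x = Σ_{a=1}^{2} M_{a|x}ᵀ ⊗ M_{a|x} ⊗ |a⟩⟨a| on ℂ²⊗ℂ²⊗ℂ². Then for every two-outcome tester (T₁, T₂) on ℂ²⊗(ℂ²⊗ℂ²) there exists a two-outcome POVM {N₁, N₂} on ℂ²⊗ℂ² such that, for all b, x ∈ {1,2}, Tr(C_x T_b) = Tr(N_b · (M_{1|x}ᵀ ⊗ M_{1|x})). In other words, every tester strategy for discriminating two projective qubit Lüders instruments reproduces the statistics of a POVM measured on the state |ψ⟩ᵀ-copy pair M_{1|x}ᵀ ⊗ M_{1|x}. -/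
open Matrix Kronecker
open scoped ComplexOrder

noncomputable section

/-- The symplectic matrix implementing the qubit "spin flip". -/
def Jm : Matrix (Fin 2) (Fin 2) ℂ := !![0,1;-1,0]

lemma adjJ (A : Matrix (Fin 2) (Fin 2) ℂ) : Jm * Aᵀ * Jmᵀ = A.trace • 1 - A := by
  ext i j
  fin_cases i <;> fin_cases j <;>
    simp [Jm, Matrix.mul_apply, Matrix.trace, Fin.sum_univ_two, Matrix.one_apply,
      Matrix.vecMul, Matrix.vecHead, Matrix.vecTail, dotProduct]

lemma JmT : Jmᵀ = -Jm := by
  ext i j; fin_cases i <;> fin_cases j <;> simp [Jm]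

lemma adjJ' (A : Matrix (Fin 2) (Fin 2) ℂ) : Jmᵀ * Aᵀ * Jm = A.trace • 1 - A := by
  rw [← adjJ A, JmT]; simp [Matrix.neg_mul, Matrix.mul_neg]

lemma JmH : Jmᴴ = Jmᵀ := by
  ext i j; fin_cases i <;> fin_cases j <;> simp [Jm]

lemma JmTJ : Jmᵀ * Jm = 1 := by
  ext i j
  fin_cases i <;> fin_cases j <;>
    simp [Jm, Matrix.mul_apply, Fin.sum_univ_two, Matrix.one_apply,
      Matrix.vecMul, Matrix.vecHead, Matrix.vecTail, dotProduct]

/-- `Jm ⊗ Jm`, the two-copy spin flip. -/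
def Km : Matrix (Fin 2 × Fin 2) (Fin 2 × Fin 2) ℂ := Jm ⊗ₖ Jm

lemma KmT : Kmᵀ = Jmᵀ ⊗ₖ Jmᵀ := (kroneckerMap_transpose _ _ _).symm

lemma KmH : Kmᴴ = Kmᵀ := by
  ext ⟨i,j⟩ ⟨k,l⟩
  simp only [Km, KmT, Matrix.conjTranspose_apply, kroneckerMap_apply, Matrix.transpose_apply]
  fin_cases i <;> fin_cases j <;> fin_cases k <;> fin_cases l <;> simp [Jm]

/-- The `a`-th diagonal block (in the outcome register) of an operator on
`ℂ² ⊗ ℂ² ⊗ ℂ²`. -/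
def blk (a : Fin 2) (T : Matrix (Fin 2 × Fin 2 × Fin 2) (Fin 2 × Fin 2 × Fin 2) ℂ) :
    Matrix (Fin 2 × Fin 2) (Fin 2 × Fin 2) ℂ :=
  T.submatrix (fun p => (p.1, p.2, a)) (fun p => (p.1, p.2, a))

lemma blk_psd (a : Fin 2) {T : Matrix (Fin 2 × Fin 2 × Fin 2) (Fin 2 × Fin 2 × Fin 2) ℂ}
    (hT : T.PosSemidef) : (blk a T).PosSemidef := hT.submatrix _

lemma blk_add (a : Fin 2) (S T : Matrix (Fin 2 × Fin 2 × Fin 2) (Fin 2 × Fin 2 × Fin 2) ℂ) :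
    blk a (S + T) = blk a S + blk a T := rfl

lemma blk_kron (a : Fin 2) (σ : Matrix (Fin 2) (Fin 2) ℂ) :
    blk a (σ ⊗ₖ (1 : Matrix (Fin 2 × Fin 2) (Fin 2 × Fin 2) ℂ)) =
      σ ⊗ₖ (1 : Matrix (Fin 2) (Fin 2) ℂ) := by
  ext ⟨i,j⟩ ⟨k,l⟩
  simp [blk, Matrix.one_apply, Prod.ext_iff]

lemma trace_blk (X Y : Matrix (Fin 2) (Fin 2) ℂ) (a : Fin 2)
    (T : Matrix (Fin 2 × Fin 2 × Fin 2) (Fin 2 × Fin 2 × Fin 2) ℂ) :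
    ((X ⊗ₖ (Y ⊗ₖ outm a)) * T).trace = ((X ⊗ₖ Y) * blk a T).trace := by
  simp [Matrix.trace, Matrix.diag, Matrix.mul_apply, outm, Matrix.single, blk,
    Fintype.sum_prod_type, mul_ite, ite_mul, mul_zero, zero_mul, ite_and,
    Finset.sum_ite_eq, Finset.sum_ite_eq', mul_assoc]

lemma trace_swap {n : Type} [Fintype n] [DecidableEq n] (R B K : Matrix n n ℂ) :
    ((K * Rᵀ * Kᵀ) * B).trace = ((Kᵀ * Bᵀ * K) * R).trace := by
  calc ((K * Rᵀ * Kᵀ) * B).trace = (((K * Rᵀ * Kᵀ) * B)ᵀ).trace := (Matrix.trace_transpose _).symm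
    _ = (Bᵀ * (K * (R * Kᵀ))).trace := by
        congr 1; simp [Matrix.transpose_mul, Matrix.mul_assoc]
    _ = ((Kᵀ * Bᵀ * K) * R).trace := by
        rw [Matrix.trace_mul_comm, Matrix.mul_assoc, Matrix.mul_assoc, Matrix.trace_mul_comm,
          Matrix.mul_assoc, Matrix.trace_mul_comm]

lemma trace_proj {v : Fin 2 → ℂ} (hv : star v ⬝ᵥ v = 1) : (proj v).trace = 1 := by
  simp only [proj, Matrix.trace, Matrix.diag, Matrix.vecMulVec_apply, Pi.star_apply]
  rw [← hv]
  simp [dotProduct, mul_comm]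

theorem stmt3 (ψ φ : Fin 2 → ℂ) (hψ : star ψ ⬝ᵥ ψ = 1) (hφ : star φ ⬝ᵥ φ = 1)
    (M₁ : Fin 2 → Matrix (Fin 2) (Fin 2) ℂ) (hM₁ : M₁ = ![proj ψ, proj φ])
    (C : Fin 2 → Matrix (Fin 2 × Fin 2 × Fin 2) (Fin 2 × Fin 2 × Fin 2) ℂ)
    (hC : ∀ x, C x = ludersChoi (M₁ x))
    (T : Fin 2 → Matrix (Fin 2 × Fin 2 × Fin 2) (Fin 2 × Fin 2 × Fin 2) ℂ)
    (hT : IsTester (T 0) (T 1)) :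
    ∃ N : Fin 2 → Matrix (Fin 2 × Fin 2) (Fin 2 × Fin 2) ℂ,
      (∀ b, (N b).PosSemidef) ∧ N 0 + N 1 = 1 ∧
      ∀ b x, (C x * T b).trace = (N b * ((M₁ x)ᵀ ⊗ₖ (M₁ x))).trace := by
  obtain ⟨hT0, hT1, σ, hσ, hσtr, hsum⟩ := hT
  have hTpsd : ∀ b, (T b).PosSemidef := by
    intro b; fin_cases b; exacts [hT0, hT1]
  refine ⟨fun b => blk 0 (T b) + Kmᵀ * (blk 1 (T b))ᵀ * Km, ?_, ?_, ?_⟩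
  · intro b
    have h1 : (Kmᵀ * (blk 1 (T b))ᵀ * Km).PosSemidef := by
      have := ((blk_psd 1 (hTpsd b)).transpose).conjTranspose_mul_mul_same Km
      rwa [KmH] at this
    exact (blk_psd 0 (hTpsd b)).add h1
  · have hb0 : blk 0 (T 0) + blk 0 (T 1) = σ ⊗ₖ (1 : Matrix (Fin 2) (Fin 2) ℂ) := by
      rw [← blk_add, hsum, blk_kron]
    have hb1 : blk 1 (T 0) + blk 1 (T 1) = σ ⊗ₖ (1 : Matrix (Fin 2) (Fin 2) ℂ) := by
      rw [← blk_add, hsum, blk_kron]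
    have hK : Kmᵀ * (σ ⊗ₖ (1 : Matrix (Fin 2) (Fin 2) ℂ))ᵀ * Km =
        (1 - σ) ⊗ₖ (1 : Matrix (Fin 2) (Fin 2) ℂ) := by
      rw [KmT, Km, ← kroneckerMap_transpose, Matrix.transpose_one, ← mul_kronecker_mul,
        ← mul_kronecker_mul, Matrix.mul_one, JmTJ, adjJ', hσtr, one_smul]
    calc (blk 0 (T 0) + Kmᵀ * (blk 1 (T 0))ᵀ * Km) + (blk 0 (T 1) + Kmᵀ * (blk 1 (T 1))ᵀ * Km)
        = (blk 0 (T 0) + blk 0 (T 1)) + Kmᵀ * (blk 1 (T 0) + blk 1 (T 1))ᵀ * Km := by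
          simp only [Matrix.transpose_add, Matrix.mul_add, Matrix.add_mul]; abel
      _ = σ ⊗ₖ (1 : Matrix (Fin 2) (Fin 2) ℂ) + (1 - σ) ⊗ₖ (1 : Matrix (Fin 2) (Fin 2) ℂ) := by
          rw [hb0, hb1, hK]
      _ = 1 := by rw [← add_kronecker, add_sub_cancel, one_kronecker_one]
  · intro b x
    have h1 : (M₁ x).trace = 1 := by
      fin_cases x <;> simp [hM₁, trace_proj hψ, trace_proj hφ]
    set P := M₁ x with hP
    have hQ : (1 : Matrix (Fin 2) (Fin 2) ℂ) - P = Jm * Pᵀ * Jmᵀ := by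
      rw [adjJ, h1, one_smul]
    have hQT : ((1 : Matrix (Fin 2) (Fin 2) ℂ) - P)ᵀ = Jm * P * Jmᵀ := by
      rw [hQ]; simp [Matrix.transpose_mul, Matrix.mul_assoc]
    have h2 : ((1 : Matrix (Fin 2) (Fin 2) ℂ) - P)ᵀ ⊗ₖ ((1 : Matrix (Fin 2) (Fin 2) ℂ) - P)
        = Km * (Pᵀ ⊗ₖ P)ᵀ * Kmᵀ := by
      rw [hQT]
      conv_lhs => rw [hQ]
      rw [KmT, Km, ← kroneckerMap_transpose, Matrix.transpose_transpose,
        ← mul_kronecker_mul, ← mul_kronecker_mul]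
    rw [hC x, ludersChoi, Matrix.add_mul, Matrix.trace_add, trace_blk, trace_blk, ← hP, h2,
      trace_swap]
    show _ = ((blk 0 (T b) + Kmᵀ * (blk 1 (T b))ᵀ * Km) * (Pᵀ ⊗ₖ P)).trace
    rw [Matrix.add_mul, Matrix.trace_add, Matrix.trace_mul_comm (blk 0 (T b))]
end
end

section
/- Let (M_{a|x})_{a=1}^{n}, for x = 1, …, N, be POVMs on ℂ^d, each with n outcomes, and let p_x ≥ 0 with Σ_x p_x = 1. Let C^M_x = Σ_{a=1}^{n} M_{a|x}ᵀ ⊗ |a⟩⟨a| on ℂ^d⊗ℂ^n be the Choi operator of the measure-and-prepare channel of the x-th POVM, and let C^L_x = Σ_{a=1}^{n} (I ⊗ √M_{a|x}) |φ⁺_d⟩⟨φ⁺_d| (I ⊗ √M_{a|x}) ⊗ |a⟩⟨a| on ℂ^d⊗ℂ^d⊗ℂ^n be the Choi operator of its Lüders instrument, where |φ⁺_d⟩ = Σ_{j=1}^{d} e_j ⊗ e_j and √M denotes the positive semidefinite square root. Then for every N-outcome tester (T_x)_{x=1}^{N} on ℂ^d⊗ℂ^n there exists an N-outcome tester (T'_x)_{x=1}^{N}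 on ℂ^d⊗(ℂ^d⊗ℂ^n) such that Σ_x p_x Tr(C^L_x T'_x) = Σ_x p_x Tr(C^M_x T_x). In particular, access to the post-measurement state never decreases the optimal measurement-discrimination success probability. -/
open Matrix Kronecker
open scoped ComplexOrder Classical

noncomputable section

/-- The unnormalized maximally entangled vector `|φ⁺_d⟩ = Σ_j e_j ⊗ e_j` in `ℂ^d ⊗ ℂ^d`. -/
def phiPlus (d : ℕ) : Fin d × Fin d → ℂ :=
  fun jj => if jj.1 = jj.2 then 1 else 0

/-- The positive semidefinite square root of a positive semidefinite matrix
(junk value `0` on non-PSD matrices). -/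
def psqrt {d : Type} [Fintype d] [DecidableEq d] (M : Matrix d d ℂ) : Matrix d d ℂ :=
  if h : M.PosSemidef then
    h.1.eigenvectorUnitary.1 * diagonal ((↑) ∘ (Real.sqrt ∘ h.1.eigenvalues)) *
      (star h.1.eigenvectorUnitary : Matrix d d ℂ)
  else 0

/-- An `N`-outcome tester on `ℂ^{dIn} ⊗ ℂ^{dOut}`. -/
def IsTesterFam {N : ℕ} {dIn dOut : Type} [Fintype dIn] [Fintype dOut]
    [DecidableEq dIn] [DecidableEq dOut]
    (T : Fin N → Matrix (dIn × dOut) (dIn × dOut) ℂ) : Prop :=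
  (∀ x, (T x).PosSemidef) ∧
    ∃ σ : Matrix dIn dIn ℂ, σ.PosSemidef ∧ σ.trace = 1 ∧
      ∑ x, T x = σ ⊗ₖ (1 : Matrix dOut dOut ℂ)

/-- Choi operator of the measure-and-prepare channel of the POVM `M`. -/
def mpChoi {d n : ℕ} (M : Fin n → Matrix (Fin d) (Fin d) ℂ) :
    Matrix (Fin d × Fin n) (Fin d × Fin n) ℂ :=
  ∑ a, (M a)ᵀ ⊗ₖ outm a

/-- Choi operator of the Lüders instrument of the POVM `M`. -/
def ludersChoiGen {d n : ℕ} (M : Fin n → Matrix (Fin d) (Fin d) ℂ) :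
    Matrix (Fin d × Fin d × Fin n) (Fin d × Fin d × Fin n) ℂ :=
  ∑ a, Matrix.reindex (Equiv.prodAssoc (Fin d) (Fin d) (Fin n))
      (Equiv.prodAssoc (Fin d) (Fin d) (Fin n))
    ((((1 : Matrix (Fin d) (Fin d) ℂ) ⊗ₖ psqrt (M a)) *
        Matrix.vecMulVec (phiPlus d) (star (phiPlus d)) *
        ((1 : Matrix (Fin d) (Fin d) ℂ) ⊗ₖ psqrt (M a))) ⊗ₖ outm a)

/-- Index shuffle `((i,a),k) ↦ (i,k,a)`. -/
def eqv (d n : ℕ) : (Fin d × Fin n) × Fin d ≃ Fin d × Fin d × Fin n where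
  toFun := fun p => (p.1.1, p.2, p.1.2)
  invFun := fun q => ((q.1, q.2.2), q.2.1)
  left_inv := fun _ => rfl
  right_inv := fun _ => rfl

lemma L_entry (d : ℕ) (S : Matrix (Fin d) (Fin d) ℂ) (i k i' k' : Fin d) :
    (((1 : Matrix (Fin d) (Fin d) ℂ) ⊗ₖ S) *
        Matrix.vecMulVec (phiPlus d) (star (phiPlus d)) *
        ((1 : Matrix (Fin d) (Fin d) ℂ) ⊗ₖ S)) (i, k) (i', k') = S k i * S i' k' := by
  simp [Matrix.mul_apply, Matrix.vecMulVec_apply, Matrix.kronecker_apply, Matrix.one_apply,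
    phiPlus, Fintype.sum_prod_type, ite_and, Finset.sum_ite_eq, Finset.sum_ite_eq',
    Pi.star_apply, apply_ite, mul_comm]

lemma kron_one_conjTranspose {m k : Type} [Fintype m] [Fintype k] [DecidableEq m] [DecidableEq k]
    (A : Matrix m m ℂ) : (A ⊗ₖ (1 : Matrix k k ℂ))ᴴ = Aᴴ ⊗ₖ (1 : Matrix k k ℂ) := by
  ext ⟨i, j⟩ ⟨i', j'⟩
  rcases eq_or_ne j j' with h | h
  · subst h
    simp [Matrix.conjTranspose_apply, Matrix.kronecker_apply, Matrix.one_apply]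
  · simp [Matrix.conjTranspose_apply, Matrix.kronecker_apply, Matrix.one_apply, h, Ne.symm h]

lemma kron_one_posSemidef {m k : Type} [Fintype m] [Fintype k] [DecidableEq m] [DecidableEq k]
    {A : Matrix m m ℂ} (hA : A.PosSemidef) :
    (A ⊗ₖ (1 : Matrix k k ℂ)).PosSemidef := by
  exact hA.kronecker Matrix.PosSemidef.one

lemma trace_key (d n : ℕ) (M : Fin n → Matrix (Fin d) (Fin d) ℂ)
    (hM : ∀ a, (M a).PosSemidef) (T : Matrix (Fin d × Fin n) (Fin d × Fin n) ℂ) :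
    (ludersChoiGen M *
        Matrix.reindex (eqv d n) (eqv d n) (T ⊗ₖ (1 : Matrix (Fin d) (Fin d) ℂ))).trace =
      (mpChoi M * T).trace := by
  have hsq : ∀ a, psqrt (M a) * psqrt (M a) = M a := by
    intro a
    rw [psqrt, dif_pos (hM a)]
    have h := hM a
    have hU : (star h.1.eigenvectorUnitary : Matrix (Fin d) (Fin d) ℂ) *
        h.1.eigenvectorUnitary.1 = 1 :=
      h.1.eigenvectorUnitary.2.1
    have hD : diagonal ((↑) ∘ (Real.sqrt ∘ h.1.eigenvalues)) *
        diagonal ((↑) ∘ (Real.sqrt ∘ h.1.eigenvalues))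
        = diagonal (((↑) : ℝ → ℂ) ∘ h.1.eigenvalues) := by
      rw [diagonal_mul_diagonal]
      congr 1; funext i
      simp only [Function.comp_apply]
      rw [← Complex.ofReal_mul, Real.mul_self_sqrt (h.eigenvalues_nonneg i)]
    calc _ = h.1.eigenvectorUnitary.1 * (diagonal ((↑) ∘ (Real.sqrt ∘ h.1.eigenvalues)) *
        ((star h.1.eigenvectorUnitary : Matrix (Fin d) (Fin d) ℂ) * h.1.eigenvectorUnitary.1) *
        diagonal ((↑) ∘ (Real.sqrt ∘ h.1.eigenvalues))) *
        (star h.1.eigenvectorUnitary : Matrix (Fin d) (Fin d) ℂ) := by simp only [Matrix.mul_assoc]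
      _ = M a := by
        rw [hU, Matrix.mul_one, hD]
        conv_rhs => rw [h.1.spectral_theorem]
        rfl
  rw [ludersChoiGen, mpChoi, Finset.sum_mul, Finset.sum_mul, Matrix.trace_sum, Matrix.trace_sum]
  refine Finset.sum_congr rfl fun a _ => ?_
  rw [Matrix.trace, Matrix.trace]
  simp only [Matrix.diag_apply, Matrix.mul_apply, Fintype.sum_prod_type]
  simp only [Matrix.reindex_apply, Matrix.submatrix_apply, eqv, Equiv.coe_fn_symm_mk,
    Equiv.prodAssoc_symm_apply, Matrix.kronecker_apply, outm, Matrix.single,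
    Matrix.one_apply, Matrix.of_apply, L_entry, Matrix.transpose_apply]
  simp only [ite_and, mul_ite, ite_mul, zero_mul, mul_zero, mul_one, one_mul,
    Finset.sum_ite_eq, Finset.sum_ite_eq', Finset.mem_univ, if_true,
    Finset.sum_ite_irrel, Finset.sum_const_zero]
  refine Finset.sum_congr rfl fun i _ => ?_
  rw [Finset.sum_comm]
  refine Finset.sum_congr rfl fun i' _ => ?_
  rw [← Finset.sum_mul]
  congr 1
  have h2 : (∑ k, psqrt (M a) k i * psqrt (M a) i' k) = (psqrt (M a) * psqrt (M a)) i' i := by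
    rw [Matrix.mul_apply]
    exact Finset.sum_congr rfl fun k _ => mul_comm _ _
  rw [h2, hsq a]

theorem stmt6 (d n N : ℕ) (M : Fin N → Fin n → Matrix (Fin d) (Fin d) ℂ)
    (hMpos : ∀ x a, (M x a).PosSemidef) (hMsum : ∀ x, ∑ a, M x a = 1)
    (p : Fin N → ℝ) (hp : ∀ x, 0 ≤ p x) (hpsum : ∑ x, p x = 1)
    (T : Fin N → Matrix (Fin d × Fin n) (Fin d × Fin n) ℂ) (hT : IsTesterFam T) :
    ∃ T' : Fin N → Matrix (Fin d × Fin d × Fin n) (Fin d × Fin d × Fin n) ℂ,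
      IsTesterFam T' ∧
      ∑ x, (p x : ℂ) * (ludersChoiGen (M x) * T' x).trace =
        ∑ x, (p x : ℂ) * (mpChoi (M x) * T x).trace := by
  obtain ⟨hTpos, σ, hσpos, hσtr, hTsum⟩ := hT
  refine ⟨fun x => Matrix.reindex (eqv d n) (eqv d n)
      (T x ⊗ₖ (1 : Matrix (Fin d) (Fin d) ℂ)), ⟨?_, σ, hσpos, hσtr, ?_⟩, ?_⟩
  · intro x
    have := (kron_one_posSemidef (hTpos x)).submatrix ((eqv d n).symm : _ → _)
    simpa [Matrix.reindex_apply] using this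
  · ext ⟨i, k, b⟩ ⟨i', k', b'⟩
    have h1 := congrFun (congrFun hTsum (i, b)) (i', b')
    simp only [Matrix.sum_apply, Matrix.kronecker_apply] at h1
    simp only [Matrix.sum_apply, Matrix.reindex_apply, Matrix.submatrix_apply, eqv,
      Equiv.coe_fn_symm_mk, Matrix.kronecker_apply]
    rw [← Finset.sum_mul, h1]
    rcases eq_or_ne k k' with hk | hk <;> rcases eq_or_ne b b' with hb | hb <;>
      simp [Matrix.one_apply, hk, hb, Prod.ext_iff, mul_assoc]
  · refine Finset.sum_congr rfl fun x _ => ?_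
    rw [trace_key d n (M x) (hMpos x) (T x)]
end
end
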